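/- In a metric transportation game with n players and m buses, let σ be a Nash equilibrium and let j* be a bus satisfying d(p_1^{j*},t) + (route length of j*) ≤ (2/m)·Σ_{k∈N} d(k,t). Then every player i with σ_i ≠ j* has equilibrium cost c_i(σ) ≤ d(i,t) + (2/m)·Σ_{k∈N} d(k,t), and every player i with σ_i = j* has c_i(σ) ≤ (2/m)·Σ_{k∈N} d(k,t). -/

import Mathlib

open Finset

/-- Length of a bus route that visits the points of `l` in order and then ends at the
destination `t` (the initial segment from the depot is ignored). -/
noncomputable def routeLen {V : Type*} [PseudoMetricSpace V] (t : V) (l : List V) : ℝ :=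
  ∑ i ∈ Finset.range l.length, dist (l.getD i t) (l.getD (i + 1) t)

/-- The route of bus `j` under outcome `σ`: the players that chose bus `j`, in the order
given by the fixed permutation list `ord j` of bus `j`. -/
def busRoute {n m : ℕ} (ord : Fin m → List (Fin n)) (σ : Fin n → Fin m) (j : Fin m) :
    List (Fin n) :=
  (ord j).filter (fun i => decide (σ i = j))

/-- `ord` gives, for every bus, a permutation of all the players. -/
def validOrd {n m : ℕ} (ord : Fin m → List (Fin n)) : Prop :=
  ∀ j : Fin m, (ord j).Nodup ∧ ∀ i : Fin n, i ∈ ord j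

/-- The cost of player `i` under outcome `σ`: the distance traveled by `i`'s bus from the
location of `i` to the destination `t`. -/
noncomputable def playerCost {V : Type*} [PseudoMetricSpace V] {n m : ℕ}
    (x : Fin n → V) (t : V) (ord : Fin m → List (Fin n)) (σ : Fin n → Fin m)
    (i : Fin n) : ℝ :=
  routeLen t
    (((busRoute ord σ (σ i)).drop ((busRoute ord σ (σ i)).idxOf i)).map x)

/-- The utilitarian social cost: the sum of the costs of all players. -/
noncomputable def socialU {V : Type*} [PseudoMetricSpace V] {n m : ℕ}
    (x : Fin n → V) (t : V) (ord : Fin m → List (Fin n)) (σ : Fin n → Fin m) : ℝ :=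
  ∑ i : Fin n, playerCost x t ord σ i

/-- The egalitarian social cost: the largest cost of a player. -/
noncomputable def socialE {V : Type*} [PseudoMetricSpace V] {n m : ℕ}
    (x : Fin n → V) (t : V) (ord : Fin m → List (Fin n)) (σ : Fin n → Fin m) : ℝ :=
  ⨆ i : Fin n, playerCost x t ord σ i

/-- `σ` is a (pure) Nash equilibrium: no player can decrease her cost by unilaterally
switching to another bus. -/
def isNash {V : Type*} [PseudoMetricSpace V] {n m : ℕ}
    (x : Fin n → V) (t : V) (ord : Fin m → List (Fin n)) (σ : Fin n → Fin m) : Prop :=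
  ∀ i : Fin n, ∀ j : Fin m,
    playerCost x t ord σ i ≤ playerCost x t ord (Function.update σ i j) i


/-!
A player who switches to bus `j*` is inserted into its route and then rides a tail of the old
route of `j*`; by the triangle inequality through `t` this costs at most `d(i,t)` plus the length
of the closed tour `t → route of j* → t`, and dropping a prefix of a route never lengthens that
closed tour. A player already on `j*` rides a tail of the same tour.
-/

/-- The closed tour `t → l → t`; for `l = []` it has length `0`. -/
noncomputable def tourLen {V : Type*} [PseudoMetricSpace V] (t : V) (l : List V) : ℝ :=
  dist (l.getD 0 t) t + routeLen t l

section Tour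

variable {V : Type*} [PseudoMetricSpace V] (t : V)

lemma routeLen_cons (a : V) (l : List V) :
    routeLen t (a :: l) = dist a (l.getD 0 t) + routeLen t l := by
  rw [routeLen, routeLen, List.length_cons, Finset.sum_range_succ', add_comm]
  simp

lemma routeLen_le_tourLen (l : List V) : routeLen t l ≤ tourLen t l :=
  le_add_of_nonneg_left dist_nonneg

lemma routeLen_cons_le (a : V) (l : List V) :
    routeLen t (a :: l) ≤ dist a t + tourLen t l := by
  rw [routeLen_cons, tourLen, ← add_assoc]
  gcongr
  exact dist_triangle_right a (l.getD 0 t) t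

lemma tourLen_le_tourLen_cons (a : V) (l : List V) :
    tourLen t l ≤ tourLen t (a :: l) := by
  rw [tourLen, tourLen, routeLen_cons, List.getD_cons_zero, ← add_assoc]
  gcongr
  exact (dist_triangle_left (l.getD 0 t) t a).trans_eq (add_comm _ _)

lemma tourLen_le_of_suffix {l₁ l₂ : List V} (h : l₁ <:+ l₂) : tourLen t l₁ ≤ tourLen t l₂ := by
  obtain ⟨s, rfl⟩ := h
  induction s with
  | nil => rfl
  | cons a s ih => exact ih.trans (tourLen_le_tourLen_cons t a _)

end Tour

section Bus

variable {n m : ℕ} (ord : Fin m → List (Fin n)) (σ : Fin n → Fin m)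

lemma filter_update_eq_of_notMem {i : Fin n} {j : Fin m} (l : List (Fin n)) (hi : i ∉ l) :
    l.filter (fun k => decide (Function.update σ i j k = j)) =
      l.filter (fun k => decide (σ k = j)) :=
  List.filter_congr fun k hk => by rw [Function.update_of_ne (ne_of_mem_of_not_mem hk hi)]

lemma exists_busRoute_update_drop_idxOf (hord : validOrd ord) (i : Fin n) (j : Fin m) :
    ∃ B, (busRoute ord (Function.update σ i j) j).drop
        ((busRoute ord (Function.update σ i j) j).idxOf i) = i :: B ∧
      B <:+ busRoute ord σ j := by
  obtain ⟨A, B, hAB⟩ := List.append_of_mem ((hord j).2 i)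
  have hnd := (hord j).1
  rw [hAB, List.nodup_append', List.nodup_cons] at hnd
  have hiA : i ∉ A := fun h => hnd.2.2 h List.mem_cons_self
  have hnew : busRoute ord (Function.update σ i j) j =
      A.filter (fun k => decide (σ k = j)) ++ i :: B.filter (fun k => decide (σ k = j)) := by
    rw [busRoute, hAB, List.filter_append, List.filter_cons, filter_update_eq_of_notMem σ A hiA,
      filter_update_eq_of_notMem σ B hnd.2.1.1]
    simp
  refine ⟨B.filter (fun k => decide (σ k = j)), ?_, ?_⟩
  · rw [hnew, List.idxOf_append_of_notMem (fun h => hiA (List.mem_of_mem_filter h)),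
      List.idxOf_cons_self, Nat.add_zero, List.drop_left]
  · rw [busRoute, hAB, List.filter_append, List.filter_cons]
    split
    · exact (List.suffix_cons _ _).trans (List.suffix_append _ _)
    · exact List.suffix_append _ _

variable {V : Type*} [PseudoMetricSpace V] (x : Fin n → V) (t : V)

lemma playerCost_le_tourLen (i : Fin n) :
    playerCost x t ord σ i ≤ tourLen t ((busRoute ord σ (σ i)).map x) := by
  rw [playerCost, List.map_drop]
  exact (routeLen_le_tourLen t _).trans (tourLen_le_of_suffix t (List.drop_suffix _ _))

lemma playerCost_update_le (hord : validOrd ord) (i : Fin n) (j : Fin m) :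
    playerCost x t ord (Function.update σ i j) i ≤
      dist (x i) t + tourLen t ((busRoute ord σ j).map x) := by
  obtain ⟨B, hdrop, hB⟩ := exists_busRoute_update_drop_idxOf ord σ hord i j
  rw [playerCost, Function.update_self, hdrop, List.map_cons]
  exact (routeLen_cons_le t _ _).trans (by gcongr; exact tourLen_le_of_suffix t (hB.map x))

end Bus

/-- if `σ` is a Nash equilibrium and `j*` is a bus with
`d(p_1^{j*},t) + (route length of j*) ≤ (2/m)·Σ_k d(k,t)`, then every player `i` with
`σ_i ≠ j*` has `c_i(σ) ≤ d(i,t) + (2/m)·Σ_k d(k,t)`, and every player `i` with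
`σ_i = j*` has `c_i(σ) ≤ (2/m)·Σ_k d(k,t)`. -/
theorem stmt16 {V : Type*} [MetricSpace V] {n m : ℕ}
    (x : Fin n → V) (t : V) (ord : Fin m → List (Fin n)) (hord : validOrd ord)
    (σ : Fin n → Fin m) (hNE : isNash x t ord σ) (jstar : Fin m)
    (hj : dist (((busRoute ord σ jstar).map x).getD 0 t) t +
            routeLen t ((busRoute ord σ jstar).map x) ≤
          (2 / (m : ℝ)) * ∑ k : Fin n, dist (x k) t) :
    (∀ i : Fin n, σ i ≠ jstar →
        playerCost x t ord σ i ≤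
          dist (x i) t + (2 / (m : ℝ)) * ∑ k : Fin n, dist (x k) t) ∧
    (∀ i : Fin n, σ i = jstar →
        playerCost x t ord σ i ≤ (2 / (m : ℝ)) * ∑ k : Fin n, dist (x k) t) := by
  refine ⟨fun i _ => ?_, fun i hi => ?_⟩
  · calc playerCost x t ord σ i ≤ playerCost x t ord (Function.update σ i jstar) i := hNE i jstar
      _ ≤ dist (x i) t + tourLen t ((busRoute ord σ jstar).map x) :=
        playerCost_update_le ord σ x t hord i jstar
      _ ≤ _ := add_le_add_right hj _
  · subst hi
    exact (playerCost_le_tourLen ord σ x t i).trans hj
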